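/- arXiv:1503.08602 — 2 statements merged into one kernel-verified Lean document; each statement's English description precedes it below -/
import Mathlib

section
/- For any two languages U, V ⊆ Σ*, the set of prefixes of the shuffle product equals the shuffle product of the sets of prefixes: pre(U ⧢ V) = pre(U) ⧢ pre(V). -/
namespace ShuffleProj

variable {α : Type*}

/-- The shuffle of two words, defined inductively. -/
def shuffle : List α → List α → Set (List α)
  | u, [] => {u}
  | [], v => {v}
  | a :: u, b :: v =>
      (List.cons a) '' shuffle u (b :: v) ∪ (List.cons b) '' shuffle (a :: u) v
  termination_by u v => u.length + v.length

/-- The shuffle product of two languages. -/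
def lshuffle (U V : Set (List α)) : Set (List α) :=
  {w | ∃ u ∈ U, ∃ v ∈ V, w ∈ shuffle u v}

/-- `shufflePow P n` is `P^(⧢,n)`: `shufflePow P 1 = P ∪ {ε}` and
`shufflePow P (n+1) = shufflePow P n ⧢ (P ∪ {ε})`.  (`shufflePow P 0 = {ε}`
is a definitional device making these equations hold.) -/
def shufflePow (P : Set (List α)) : ℕ → Set (List α)
  | 0 => {[]}
  | n + 1 => lshuffle (shufflePow P n) (P ∪ {[]})

/-- The iterated shuffle `P^⧢ = ⋃_{n ≥ 1} P^(⧢,n)`. -/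
def iterShuffle (P : Set (List α)) : Set (List α) :=
  ⋃ n : ℕ, shufflePow P (n + 1)

/-- The set of prefixes of words of a language. -/
def pre (L : Set (List α)) : Set (List α) := {u | ∃ w ∈ L, u <+: w}

/-- The shuffle factors of `M ⊆ P^⧢`. -/
def SWF (P M : Set (List α)) : Set (List α) :=
  {u | u ∈ iterShuffle P ∧ ∃ w ∈ M, ∃ v ∈ iterShuffle P, w ∈ shuffle u v}

/-- `SWFn P n M`: shuffle factors of `M` with cofactor in `P^(⧢,n)`. -/
def SWFn (P : Set (List α)) (n : ℕ) (M : Set (List α)) : Set (List α) :=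
  {u | u ∈ iterShuffle P ∧ ∃ w ∈ M, ∃ v ∈ shufflePow P n, w ∈ shuffle u v}

theorem shuffle_nil_right (u : List α) : shuffle u [] = {u} := by
  cases u <;> simp [shuffle]

theorem shuffle_nil_left (v : List α) : shuffle [] v = {v} := by
  cases v <;> simp [shuffle]

theorem shuffle_cons_cons (a b : α) (u v : List α) :
    shuffle (a :: u) (b :: v) =
      (List.cons a) '' shuffle u (b :: v) ∪ (List.cons b) '' shuffle (a :: u) v := by
  simp [shuffle]

theorem shuffle_comm (u v : List α) : shuffle u v = shuffle v u := by
  match u, v with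
  | u, [] => rw [shuffle_nil_right, shuffle_nil_left]
  | [], v => rw [shuffle_nil_right, shuffle_nil_left]
  | a :: u, b :: v =>
      rw [shuffle_cons_cons, shuffle_cons_cons,
        shuffle_comm u (b :: v), shuffle_comm (a :: u) v]
      exact Set.union_comm _ _
  termination_by u.length + v.length

theorem cons_mem_shuffle_left {a : α} {p u v : List α} (h : p ∈ shuffle u v) :
    a :: p ∈ shuffle (a :: u) v := by
  cases v with
  | nil =>
      rw [shuffle_nil_right] at h ⊢
      simp_all
  | cons b t =>
      rw [shuffle_cons_cons]
      exact Or.inl ⟨p, h, rfl⟩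

theorem cons_mem_shuffle_right {b : α} {p u v : List α} (h : p ∈ shuffle u v) :
    b :: p ∈ shuffle u (b :: v) := by
  rw [shuffle_comm] at h
  rw [shuffle_comm]
  exact cons_mem_shuffle_left h

theorem append_swap_mem_shuffle : ∀ u v : List α, v ++ u ∈ shuffle u v := by
  intro u v
  match u, v with
  | u, [] => rw [shuffle_nil_right]; simp
  | [], b :: v => rw [shuffle_nil_left]; simp
  | a :: u, b :: v =>
      rw [shuffle_cons_cons]
      exact Or.inr ⟨v ++ a :: u, append_swap_mem_shuffle (a :: u) v, rfl⟩
  termination_by u v => u.length + v.length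

theorem append_mem_shuffle_left {p : List α} (s : List α) :
    ∀ u v : List α, p ∈ shuffle u v → p ++ s ∈ shuffle (u ++ s) v := by
  intro u v h
  match u, v with
  | u, [] =>
      rw [shuffle_nil_right] at h ⊢
      simp_all
  | [], b :: v =>
      rw [shuffle_nil_left] at h
      subst h
      -- need (b :: v) ++ s ∈ shuffle s (b :: v)
      rw [List.nil_append]
      exact append_swap_mem_shuffle s (b :: v)
  | a :: u, b :: v =>
      rw [shuffle_cons_cons] at h
      rcases h with ⟨q, hq, rfl⟩ | ⟨q, hq, rfl⟩
      · have := append_mem_shuffle_left s u (b :: v) hq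
        rw [List.cons_append]
        exact cons_mem_shuffle_left this
      · have := append_mem_shuffle_left s (a :: u) v hq
        rw [List.cons_append]
        exact cons_mem_shuffle_right this
  termination_by u v => u.length + v.length

theorem append_mem_shuffle_right {p : List α} (t : List α) {u v : List α}
    (h : p ∈ shuffle u v) : p ++ t ∈ shuffle u (v ++ t) := by
  rw [shuffle_comm] at h
  rw [shuffle_comm]
  exact append_mem_shuffle_left t v u h

theorem nil_mem_shuffle_nil : ([] : List α) ∈ shuffle ([] : List α) [] := by
  rw [shuffle_nil_right]; rfl

/-- Every prefix of a shuffle is a shuffle of prefixes. -/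
theorem prefix_shuffle :
    ∀ u v w : List α, w ∈ shuffle u v → ∀ p, p <+: w →
      ∃ u' v', u' <+: u ∧ v' <+: v ∧ p ∈ shuffle u' v' := by
  intro u v w hw p hp
  match u, v with
  | u, [] =>
      rw [shuffle_nil_right] at hw
      subst hw
      exact ⟨p, [], hp, List.prefix_refl _, by rw [shuffle_nil_right]; rfl⟩
  | [], b :: v =>
      rw [shuffle_nil_left] at hw
      subst hw
      exact ⟨[], p, List.nil_prefix, hp, by rw [shuffle_nil_left]; rfl⟩
  | a :: u, b :: v =>
      rw [shuffle_cons_cons] at hw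
      rcases hw with ⟨q, hq, rfl⟩ | ⟨q, hq, rfl⟩
      · cases p with
        | nil =>
            exact ⟨[], [], List.nil_prefix, List.nil_prefix, nil_mem_shuffle_nil⟩
        | cons c p' =>
            obtain ⟨hc, hp'⟩ : c = a ∧ p' <+: q := by
              rcases hp with ⟨r, hr⟩
              injection hr with h1 h2
              exact ⟨h1, r, h2⟩
            subst hc
            obtain ⟨u', v', hu', hv', hmem⟩ := prefix_shuffle u (b :: v) q hq p' hp'
            exact ⟨c :: u', v', List.cons_prefix_cons.mpr ⟨rfl, hu'⟩, hv',
              cons_mem_shuffle_left hmem⟩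
      · cases p with
        | nil =>
            exact ⟨[], [], List.nil_prefix, List.nil_prefix, nil_mem_shuffle_nil⟩
        | cons c p' =>
            obtain ⟨hc, hp'⟩ : c = b ∧ p' <+: q := by
              rcases hp with ⟨r, hr⟩
              injection hr with h1 h2
              exact ⟨h1, r, h2⟩
            subst hc
            obtain ⟨u', v', hu', hv', hmem⟩ := prefix_shuffle (a :: u) v q hq p' hp'
            exact ⟨u', c :: v', hu', List.cons_prefix_cons.mpr ⟨rfl, hv'⟩,
              cons_mem_shuffle_right hmem⟩
  termination_by u v => u.length + v.length

/-- `pre (U ⧢ V) = pre U ⧢ pre V`. -/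
theorem pre_lshuffle (U V : Set (List α)) :
    pre (lshuffle U V) = lshuffle (pre U) (pre V) := by
  ext p
  constructor
  · rintro ⟨w, ⟨u, hu, v, hv, hw⟩, hp⟩
    obtain ⟨u', v', hu', hv', hmem⟩ := prefix_shuffle u v w hw p hp
    exact ⟨u', ⟨u, hu, hu'⟩, v', ⟨v, hv, hv'⟩, hmem⟩
  · rintro ⟨u', ⟨u, hu, s, rfl⟩, v', ⟨v, hv, t, rfl⟩, hmem⟩
    refine ⟨p ++ s ++ t, ⟨u' ++ s, hu, v' ++ t, hv, ?_⟩, ⟨s ++ t, (List.append_assoc _ _ _).symm⟩⟩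
    exact append_mem_shuffle_right t (append_mem_shuffle_left s u' v' hmem)

end ShuffleProj
end

section
/- For an alphabetic homomorphism φ : Σ* → Φ* and any language P ⊆ Σ*, the image of the iterated shuffle equals the iterated shuffle of the image: φ(P^⧢) = (φ(P))^⧢. -/
namespace ShuffleProj

variable {α : Type*}

lemma mem_shuffle_nil_right {u w : List α} : w ∈ shuffle u [] ↔ w = u := by
  cases u <;> simp [shuffle]

lemma mem_shuffle_nil_left {v w : List α} : w ∈ shuffle [] v ↔ w = v := by
  cases v <;> simp [shuffle]

lemma cons_left {u v w : List α} (a : α) (h : w ∈ shuffle u v) :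
    a :: w ∈ shuffle (a :: u) v := by
  cases v with
  | nil => rw [mem_shuffle_nil_right] at h ⊢; rw [h]
  | cons b v' =>
    simp only [shuffle, Set.mem_union, Set.mem_image]
    exact Or.inl ⟨w, h, rfl⟩

lemma cons_right {u v w : List α} (b : α) (h : w ∈ shuffle u v) :
    b :: w ∈ shuffle u (b :: v) := by
  cases u with
  | nil => rw [mem_shuffle_nil_left] at h ⊢; rw [h]
  | cons a u' =>
    simp only [shuffle, Set.mem_union, Set.mem_image]
    exact Or.inr ⟨w, h, rfl⟩

lemma filterMap_shuffle {β : Type*} (f : α → Option β) :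
    ∀ u v w : List α, w ∈ shuffle u v →
      w.filterMap f ∈ shuffle (u.filterMap f) (v.filterMap f)
  | u, [], w, h => by
    rw [mem_shuffle_nil_right] at h; subst h
    rw [List.filterMap_nil, mem_shuffle_nil_right]
  | [], b :: v, w, h => by
    rw [mem_shuffle_nil_left] at h; subst h
    rw [List.filterMap_nil, mem_shuffle_nil_left]
  | a :: u, b :: v, w, h => by
    simp only [shuffle, Set.mem_union, Set.mem_image] at h
    rcases h with ⟨x, hx, rfl⟩ | ⟨x, hx, rfl⟩
    · have ih := filterMap_shuffle f u (b :: v) x hx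
      cases hfa : f a with
      | none => rwa [List.filterMap_cons_none hfa, List.filterMap_cons_none hfa]
      | some c =>
        rw [List.filterMap_cons_some hfa, List.filterMap_cons_some hfa]
        exact cons_left c ih
    · have ih := filterMap_shuffle f (a :: u) v x hx
      cases hfb : f b with
      | none => rwa [List.filterMap_cons_none hfb, List.filterMap_cons_none hfb]
      | some d =>
        rw [List.filterMap_cons_some hfb, List.filterMap_cons_some hfb]
        exact cons_right d ih
  termination_by u v => u.length + v.length

lemma shuffle_filterMap_surj {β : Type*} (f : α → Option β) :
    ∀ u v w : List α, ∀ x ∈ shuffle (u.filterMap f) (v.filterMap f),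
      ∃ w ∈ shuffle u v, w.filterMap f = x
  | u, [], w, x, h => by
    rw [List.filterMap_nil, mem_shuffle_nil_right] at h
    exact ⟨u, mem_shuffle_nil_right.mpr rfl, h.symm⟩
  | [], b :: v, w, x, h => by
    rw [List.filterMap_nil, mem_shuffle_nil_left] at h
    exact ⟨b :: v, mem_shuffle_nil_left.mpr rfl, h.symm⟩
  | a :: u, b :: v, w, x, h => by
    cases hfa : f a with
    | none =>
      rw [List.filterMap_cons_none hfa] at h
      obtain ⟨y, hy, hyx⟩ := shuffle_filterMap_surj f u (b :: v) w x h
      exact ⟨a :: y, cons_left a hy, by rw [List.filterMap_cons_none hfa]; exact hyx⟩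
    | some c =>
      cases hfb : f b with
      | none =>
        rw [List.filterMap_cons_none hfb] at h
        obtain ⟨y, hy, hyx⟩ := shuffle_filterMap_surj f (a :: u) v w x h
        exact ⟨b :: y, cons_right b hy, by rw [List.filterMap_cons_none hfb]; exact hyx⟩
      | some d =>
        rw [List.filterMap_cons_some hfa, List.filterMap_cons_some hfb] at h
        simp only [shuffle, Set.mem_union, Set.mem_image] at h
        rcases h with ⟨y, hy, rfl⟩ | ⟨y, hy, rfl⟩
        · rw [← List.filterMap_cons_some (l := v) hfb] at hy
          obtain ⟨z, hz, hzy⟩ := shuffle_filterMap_surj f u (b :: v) w y hy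
          exact ⟨a :: z, cons_left a hz,
            by rw [List.filterMap_cons_some hfa, hzy]⟩
        · rw [← List.filterMap_cons_some (l := u) hfa] at hy
          obtain ⟨z, hz, hzy⟩ := shuffle_filterMap_surj f (a :: u) v w y hy
          exact ⟨b :: z, cons_right b hz,
            by rw [List.filterMap_cons_some hfb, hzy]⟩
  termination_by u v => u.length + v.length

lemma image_lshuffle {β : Type*} (f : α → Option β) (U V : Set (List α)) :
    (List.filterMap f) '' lshuffle U V
      = lshuffle ((List.filterMap f) '' U) ((List.filterMap f) '' V) := by
  ext x
  constructor
  · rintro ⟨w, ⟨u, hu, v, hv, hw⟩, rfl⟩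
    exact ⟨_, ⟨u, hu, rfl⟩, _, ⟨v, hv, rfl⟩, filterMap_shuffle f u v w hw⟩
  · rintro ⟨_, ⟨u, hu, rfl⟩, _, ⟨v, hv, rfl⟩, hx⟩
    obtain ⟨w, hw, hwx⟩ := shuffle_filterMap_surj f u v u x hx
    exact ⟨w, ⟨u, hu, v, hv, hw⟩, hwx⟩

lemma image_shufflePow {β : Type*} (f : α → Option β) (P : Set (List α)) :
    ∀ n, (List.filterMap f) '' shufflePow P n
      = shufflePow ((List.filterMap f) '' P) n
  | 0 => by simp [shufflePow]
  | n + 1 => by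
    rw [shufflePow, image_lshuffle, image_shufflePow f P n, Set.image_union]
    simp [shufflePow]

/-- an alphabetic homomorphism (induced by `f : α → Option β`)
commutes with the iterated shuffle: `φ(P^⧢) = (φ(P))^⧢`. -/
theorem image_iterShuffle {α β : Type*} (f : α → Option β) (P : Set (List α)) :
    (List.filterMap f) '' iterShuffle P = iterShuffle ((List.filterMap f) '' P) := by
  simp only [iterShuffle, Set.image_iUnion, image_shufflePow]

end ShuffleProj
end
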